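/- Let λ ≥ 0 and assume L̂_λ has a global minimizer over ℝ^{m×n} (not necessarily unique). Then L̂_λ has a global minimizer δ* whose rank r = rank(δ*) satisfies r(r+1)/2 ≤ KN. -/

import Mathlib

open MeasureTheory Matrix

/-- Frobenius norm of a real matrix. -/
noncomputable def frobNorm {m n : ℕ} (A : Matrix (Fin m) (Fin n) ℝ) : ℝ :=
  Real.sqrt (∑ i, ∑ j, (A i j) ^ 2)

/-- Nuclear norm of a real matrix: the sum of its singular values, i.e. the sum of the
square roots of the eigenvalues of `Aᵀ * A`. -/
noncomputable def nuclearNorm {m n : ℕ} (A : Matrix (Fin m) (Fin n) ℝ) : ℝ :=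
  ∑ i, Real.sqrt ((Matrix.isHermitian_conjTranspose_mul_self A).eigenvalues i)

/-- Matrix inner product `⟨A, B⟩ = tr(Aᵀ B)`. -/
noncomputable def mInner {m n : ℕ} (A B : Matrix (Fin m) (Fin n) ℝ) : ℝ :=
  Matrix.trace (Aᵀ * B)

/-- The linearized empirical risk
`L̂(δ) = (1/N) ∑ᵢ ℓᵢ(bᵢ + (⟨G i j, δ⟩)ⱼ)`. -/
noncomputable def Lhat {m n K N : ℕ} (G : Fin N → Fin K → Matrix (Fin m) (Fin n) ℝ)
    (b : Fin N → Fin K → ℝ) (ℓ : Fin N → (Fin K → ℝ) → ℝ)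
    (δ : Matrix (Fin m) (Fin n) ℝ) : ℝ :=
  (1 / (N : ℝ)) * ∑ i, ℓ i fun j => b i j + mInner (G i j) δ

/-!
Write a minimizer of rank `r` as `δ = A Bᵀ` with `Aᵀ A = Bᵀ B` (split the singular values evenly
between the two factors) and move along `δ_s = A (1 + s T) Bᵀ` for a symmetric `r × r` matrix `T`.
As long as `1 + s T ⪰ 0`, one has `‖δ_s‖_* = tr (Bᵀ B (1 + s T))`, which is affine in `s`.
If `r (r + 1) / 2 > K N`, a dimension count gives a symmetric `T ≠ 0` with `⟨G i j, A T Bᵀ⟩ = 0`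
for all `i, j`, so the data term is constant along the path. The objective is then affine on an
interval around `s = 0`, hence constant there by minimality, and at an endpoint of that interval
`1 + s T` is singular: `δ_s` is a minimizer of smaller rank. So a minimizer of least rank has
`r (r + 1) / 2 ≤ K N`.
-/

open Matrix Set
open scoped MatrixOrder

namespace Matrix

lemma transpose_submatrix_mul_submatrix {R n l ι : Type*} [CommSemiring R] [Fintype n]
    (W : Matrix n l R) (X : Matrix n n R) (f : ι → l) :
    (W.submatrix id f)ᵀ * X * W.submatrix id f = (Wᵀ * X * W).submatrix f f := by
  ext i j
  simp [mul_apply, Finset.sum_mul]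

lemma submatrix_mul_transpose_add_submatrix_mul_transpose {R m n : Type*} [Semiring R]
    [Fintype n] (W : Matrix m n R) (p : n → Prop) [DecidablePred p] :
    W.submatrix id (Subtype.val : {i // p i} → n) * (W.submatrix id Subtype.val)ᵀ +
      W.submatrix id (Subtype.val : {i // ¬p i} → n) * (W.submatrix id Subtype.val)ᵀ =
      W * Wᵀ := by
  ext a b
  simp only [add_apply, mul_apply, transpose_apply]
  exact Fintype.sum_subtype_add_sum_subtype p fun i => W a i * W b i

section Sym2

variable {ι K : Type*} [Field K]

def ofSym2 : (Sym2 ι → K) →ₗ[K] Matrix ι ι K where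
  toFun f := of fun i j => f s(i, j)
  map_add' _ _ := rfl
  map_smul' _ _ := rfl

lemma isSymm_ofSym2 (f : Sym2 ι → K) : (ofSym2 f).IsSymm :=
  IsSymm.ext fun _ _ => congrArg f Sym2.eq_swap

lemma ofSym2_injective : Function.Injective (ofSym2 : (Sym2 ι → K) →ₗ[K] Matrix ι ι K) := by
  intro f g h
  funext z
  induction z using Sym2.ind with
  | h i j => exact congrFun (congrFun h i) j

lemma exists_isSymm_ne_zero_map_eq_zero [Fintype ι] {V : Type*} [AddCommGroup V] [Module K V]
    [FiniteDimensional K V] (φ : Matrix ι ι K →ₗ[K] V)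
    (hdim : Module.finrank K V < Fintype.card ι * (Fintype.card ι + 1) / 2) :
    ∃ T : Matrix ι ι K, T.IsSymm ∧ T ≠ 0 ∧ φ T = 0 := by
  have hlt : Module.finrank K V < Module.finrank K (Sym2 ι → K) := by
    rwa [Module.finrank_fintype_fun_eq_card, Sym2.card, Nat.choose_two_right, Nat.add_sub_cancel,
      Nat.mul_comm]
  obtain ⟨f, hf, hf0⟩ := Submodule.exists_mem_ne_zero_of_ne_bot
    (LinearMap.ker_ne_bot_of_finrank_lt (f := φ ∘ₗ ofSym2) hlt)
  exact ⟨ofSym2 f, isSymm_ofSym2 f, fun h => hf0 (ofSym2_injective (h.trans (map_zero _).symm)),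
    hf⟩

end Sym2

section Spectral

variable {ι : Type*} [Fintype ι] [DecidableEq ι]

lemma IsHermitian.trace_cfc {A : Matrix ι ι ℝ} (hA : A.IsHermitian) (f : ℝ → ℝ) :
    (cfc f A).trace = ∑ i, f (hA.eigenvalues i) := by
  rw [hA.cfc_eq, IsHermitian.cfc, Unitary.conjStarAlgAut_apply, trace_mul_cycle,
    Unitary.coe_star_mul_self, one_mul, trace_diagonal]
  rfl

lemma IsHermitian.one_add_smul_eq_conj {T : Matrix ι ι ℝ} (hT : T.IsHermitian) (s : ℝ) :
    1 + s • T = Unitary.conjStarAlgAut ℝ _ hT.eigenvectorUnitary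
      (diagonal fun i => 1 + s * hT.eigenvalues i) := by
  conv_lhs => rw [hT.spectral_theorem]
  rw [← map_one (Unitary.conjStarAlgAut ℝ _ hT.eigenvectorUnitary), ← map_smul, ← map_add]
  congr 1
  ext i j
  by_cases h : i = j <;> simp [h]

lemma IsHermitian.exists_posSemidef_one_add_smul_rank_lt {T : Matrix ι ι ℝ} (hT : T.IsHermitian)
    (hT0 : T ≠ 0) :
    ∃ t : ℝ, (1 + t • T).PosSemidef ∧ (1 + (-t) • T).PosSemidef ∧
      (1 + t • T).rank < Fintype.card ι := by
  set μ := hT.eigenvalues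
  have : Nonempty ι := by
    rw [← not_isEmpty_iff]
    intro
    exact hT0 (Subsingleton.elim _ _)
  obtain ⟨i₀, hi₀⟩ := Finite.exists_max fun i => |μ i|
  have hμ₀ : μ i₀ ≠ 0 := by
    intro h
    refine hT0 (hT.eigenvalues_eq_zero_iff.mp (funext fun i => ?_))
    simpa [h] using hi₀ i
  have hconj (s : ℝ) (hs : ∀ i, 0 ≤ 1 + s * μ i) : (1 + s • T).PosSemidef := by
    rw [hT.one_add_smul_eq_conj, Unitary.conjStarAlgAut_apply]
    exact (PosSemidef.diagonal hs).mul_mul_conjTranspose_same _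
  -- `μ i₀` is an eigenvalue of largest modulus, so `t = -1 / μ i₀` keeps every `1 ± t μ i` ≥ 0
  -- while `1 + t μ i₀ = 0`
  have hratio (i : ι) : |μ i / μ i₀| ≤ 1 := by
    rw [abs_div, div_le_one (abs_pos.mpr hμ₀)]
    exact hi₀ i
  refine ⟨-(μ i₀)⁻¹, hconj _ fun i => ?_, hconj _ fun i => ?_, ?_⟩
  · have := (abs_le.mp (hratio i)).2
    rw [div_eq_inv_mul] at this
    linarith
  · have := (abs_le.mp (hratio i)).1
    rw [div_eq_inv_mul] at this
    linarith
  · rw [hT.one_add_smul_eq_conj, Unitary.conjStarAlgAut_apply]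
    refine ((rank_mul_le_left _ _).trans (rank_mul_le_right _ _)).trans_lt ?_
    rw [rank_diagonal]
    refine Fintype.card_subtype_lt (x := i₀) ?_
    rw [not_not, neg_mul, inv_mul_cancel₀ hμ₀, add_neg_cancel]

end Spectral

section Factorization

variable {m n : Type*} [Fintype m] [Fintype n] [DecidableEq n]

lemma exists_compact_spectral_transpose_mul_self (δ : Matrix m n ℝ) :
    ∃ (V : Matrix n (Fin δ.rank) ℝ) (d : Fin δ.rank → ℝ), Vᵀ * V = 1 ∧ δ * V * Vᵀ = δ ∧
      Vᵀ * (δᵀ * δ) * V = diagonal d ∧ ∀ i, 0 < d i := by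
  have hPSD : (δᵀ * δ).PosSemidef := by simpa using posSemidef_conjTranspose_mul_self δ
  set μ := hPSD.isHermitian.eigenvalues
  set W : Matrix n n ℝ := (hPSD.isHermitian.eigenvectorUnitary : Matrix n n ℝ)
  have hWt : Wᵀ = star W := by rw [star_eq_conjTranspose, conjTranspose_eq_transpose_of_trivial]
  have hWW : Wᵀ * W = 1 := by rw [hWt]; exact Unitary.coe_star_mul_self _
  have hWW' : W * Wᵀ = 1 := by rw [hWt]; exact Unitary.coe_mul_star_self _
  have hdiag : Wᵀ * (δᵀ * δ) * W = diagonal μ := by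
    simpa [hWt, Unitary.conjStarAlgAut_apply, Function.comp_def] using
      hPSD.isHermitian.conjStarAlgAut_star_eigenvectorUnitary
  have hcard : Fintype.card {i // μ i ≠ 0} = δ.rank := by
    rw [← hPSD.isHermitian.rank_eq_card_non_zero_eigs, rank_transpose_mul_self]
  set e := (Fintype.equivFinOfCardEq hcard).symm
  let f : Fin δ.rank → n := Subtype.val ∘ e
  have hf : Function.Injective f := Subtype.val_injective.comp e.injective
  set V : Matrix n (Fin δ.rank) ℝ := W.submatrix id f
  refine ⟨V, μ ∘ f, ?_, ?_, ?_, fun i => (hPSD.eigenvalues_nonneg _).lt_of_ne' (e i).2⟩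
  · have := transpose_submatrix_mul_submatrix W 1 f
    rwa [Matrix.mul_one, Matrix.mul_one, hWW, submatrix_one _ hf] at this
  · set U : Matrix n {i // ¬μ i ≠ 0} ℝ := W.submatrix id Subtype.val
    have hδU : δ * U = 0 := by
      rw [← conjTranspose_mul_self_eq_zero, conjTranspose_eq_transpose_of_trivial, transpose_mul,
        Matrix.mul_assoc, ← Matrix.mul_assoc δᵀ, ← Matrix.mul_assoc,
        transpose_submatrix_mul_submatrix, hdiag, submatrix_diagonal _ _ Subtype.val_injective]
      ext i j
      simp [diagonal_apply, not_not.mp i.2]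
    have hVV : V * Vᵀ = W.submatrix id (Subtype.val : {i // μ i ≠ 0} → n) *
        (W.submatrix id Subtype.val)ᵀ := by
      ext a b
      simp only [mul_apply, transpose_apply, submatrix_apply, id, V, f, Function.comp_apply]
      exact e.sum_comp fun i => W a i * W b i
    symm
    calc δ = δ * (W * Wᵀ) := by rw [hWW', Matrix.mul_one]
      _ = δ * V * Vᵀ + δ * U * Uᵀ := by
        rw [← submatrix_mul_transpose_add_submatrix_mul_transpose W (μ · ≠ 0), Matrix.mul_add,
          Matrix.mul_assoc, Matrix.mul_assoc, hVV]
        rfl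
      _ = δ * V * Vᵀ := by rw [hδU, Matrix.zero_mul, add_zero]
  · rw [transpose_submatrix_mul_submatrix, hdiag, submatrix_diagonal _ _ hf]

lemma exists_balanced_factorization (δ : Matrix m n ℝ) :
    ∃ (A : Matrix m (Fin δ.rank) ℝ) (B : Matrix n (Fin δ.rank) ℝ),
      A * Bᵀ = δ ∧ Aᵀ * A = Bᵀ * B := by
  obtain ⟨V, d, hVV, hδV, hdiag, hd⟩ := exists_compact_spectral_transpose_mul_self δ
  -- `d` holds the squared singular values, so `q` is the square root of the singular values
  set q : Fin δ.rank → ℝ := fun i => √√(d i)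
  have hq (i) : 0 < q i := Real.sqrt_pos.mpr (Real.sqrt_pos.mpr (hd i))
  have hq4 (i) : q i ^ 2 * q i ^ 2 = d i := by
    simp only [q, Real.sq_sqrt (Real.sqrt_nonneg _), Real.mul_self_sqrt (hd i).le]
  refine ⟨δ * V * diagonal q⁻¹, V * diagonal q, ?_, ?_⟩
  · rw [transpose_mul, diagonal_transpose, Matrix.mul_assoc, ← Matrix.mul_assoc (diagonal _),
      diagonal_mul_diagonal]
    have : (fun i => q⁻¹ i * q i) = fun _ => 1 := funext fun i => inv_mul_cancel₀ (hq i).ne'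
    rw [this, diagonal_one, Matrix.one_mul, hδV]
  · have hA : (δ * V * diagonal q⁻¹)ᵀ * (δ * V * diagonal q⁻¹)
        = diagonal q⁻¹ * (Vᵀ * (δᵀ * δ) * V) * diagonal q⁻¹ := by
      simp only [transpose_mul, diagonal_transpose, Matrix.mul_assoc]
    have hB : (V * diagonal q)ᵀ * (V * diagonal q) = diagonal q * (Vᵀ * V) * diagonal q := by
      simp only [transpose_mul, diagonal_transpose, Matrix.mul_assoc]
    rw [hA, hB, hdiag, hVV, Matrix.mul_one, diagonal_mul_diagonal, diagonal_mul_diagonal,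
      diagonal_mul_diagonal]
    congr 1
    funext i
    rw [Pi.inv_apply, ← hq4 i]
    field_simp [(hq i).ne']

end Factorization

end Matrix

lemma nuclearNorm_eq_trace_sqrt {m n : ℕ} (Y : Matrix (Fin m) (Fin n) ℝ) :
    nuclearNorm Y = (CFC.sqrt (Yᵀ * Y)).trace := by
  have hY := posSemidef_conjTranspose_mul_self Y
  rw [conjTranspose_eq_transpose_of_trivial] at hY
  rw [CFC.sqrt_eq_real_sqrt _ hY.nonneg, cfcₙ_eq_cfc, hY.isHermitian.trace_cfc, nuclearNorm]
  rfl

lemma nuclearNorm_mul_mul_transpose {m n : ℕ} {ι : Type*} [Fintype ι] [DecidableEq ι]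
    {A : Matrix (Fin m) ι ℝ} {B : Matrix (Fin n) ι ℝ} (hAB : Aᵀ * A = Bᵀ * B)
    {M : Matrix ι ι ℝ} (hM : M.PosSemidef) :
    nuclearNorm (A * M * Bᵀ) = (Bᵀ * B * M).trace := by
  have hMt : Mᵀ = M := (by simpa using hM.isHermitian : M.IsSymm).eq
  have hX : (B * M * Bᵀ).PosSemidef := by
    simpa using hM.mul_mul_conjTranspose_same B
  have hsq : (A * M * Bᵀ)ᵀ * (A * M * Bᵀ) = (B * M * Bᵀ) ^ 2 := by
    simp only [transpose_mul, transpose_transpose, hMt, sq, Matrix.mul_assoc]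
    rw [← Matrix.mul_assoc Aᵀ, hAB]
    simp only [Matrix.mul_assoc]
  rw [nuclearNorm_eq_trace_sqrt, hsq, CFC.sqrt_sq _ hX.nonneg, trace_mul_cycle]

section LowRank

variable {m n : ℕ} {P : Type*} [Fintype P]

/-- `L̂_λ` is the instance `P = Fin N × Fin K` of this objective, with `g` the averaged loss. -/
noncomputable def nuclearPenalized (g : (P → ℝ) → ℝ) (G : P → Matrix (Fin m) (Fin n) ℝ)
    (lam : ℝ) (δ : Matrix (Fin m) (Fin n) ℝ) : ℝ :=
  g (fun p => mInner (G p) δ) + lam * nuclearNorm δ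

variable {g : (P → ℝ) → ℝ} {G : P → Matrix (Fin m) (Fin n) ℝ} {lam : ℝ}

lemma exists_isMinOn_nuclearPenalized_rank_lt {ι : Type*} [Fintype ι] [DecidableEq ι]
    {A : Matrix (Fin m) ι ℝ} {B : Matrix (Fin n) ι ℝ} (hAB : Aᵀ * A = Bᵀ * B)
    (hmin : IsMinOn (nuclearPenalized g G lam) univ (A * Bᵀ))
    (hcard : Fintype.card P < Fintype.card ι * (Fintype.card ι + 1) / 2) :
    ∃ δ, IsMinOn (nuclearPenalized g G lam) univ δ ∧ δ.rank < Fintype.card ι := by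
  let φ : Matrix ι ι ℝ →ₗ[ℝ] (P → ℝ) :=
    { toFun := fun M p => mInner (G p) (A * M * Bᵀ)
      map_add' := fun M N => by
        funext p
        simp [mInner, Matrix.mul_add, Matrix.add_mul, trace_add]
      map_smul' := fun c M => by
        funext p
        simp [mInner, trace_smul] }
  have hdim : Module.finrank ℝ (P → ℝ) < Fintype.card ι * (Fintype.card ι + 1) / 2 := by
    rwa [Module.finrank_fintype_fun_eq_card]
  obtain ⟨T, hTs, hT0, hφT⟩ := exists_isSymm_ne_zero_map_eq_zero φ hdim
  obtain ⟨t, hplus, hminus, hrank⟩ :=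
    (isHermitian_iff_isSymm.mpr hTs).exists_posSemidef_one_add_smul_rank_lt hT0
  have hval (s : ℝ) (hs : (1 + s • T).PosSemidef) :
      nuclearPenalized g G lam (A * (1 + s • T) * Bᵀ) =
        nuclearPenalized g G lam (A * Bᵀ) + s * (lam * (Bᵀ * B * T).trace) := by
    have hdata : φ (1 + s • T) = φ 1 := by rw [map_add, map_smul, hφT, smul_zero, add_zero]
    have h1 : A * Bᵀ = A * (1 : Matrix ι ι ℝ) * Bᵀ := by rw [Matrix.mul_one]
    rw [h1, nuclearPenalized, nuclearPenalized, nuclearNorm_mul_mul_transpose hAB hs,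
      nuclearNorm_mul_mul_transpose hAB PosSemidef.one]
    change g (φ (1 + s • T)) + _ = g (φ 1) + _ + _
    rw [hdata, Matrix.mul_add, trace_add, Matrix.mul_smul, trace_smul, smul_eq_mul]
    ring
  have hzero : t * (lam * (Bᵀ * B * T).trace) = 0 := by
    have hle_plus := isMinOn_univ_iff.mp hmin (A * (1 + t • T) * Bᵀ)
    have hle_minus := isMinOn_univ_iff.mp hmin (A * (1 + (-t) • T) * Bᵀ)
    rw [hval t hplus] at hle_plus
    rw [hval (-t) hminus] at hle_minus
    linarith
  refine ⟨A * (1 + t • T) * Bᵀ, ?_, ?_⟩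
  · refine isMinOn_univ_iff.mpr fun δ => ?_
    rw [hval t hplus, hzero, add_zero]
    exact isMinOn_univ_iff.mp hmin δ
  · exact ((rank_mul_le_left _ _).trans (rank_mul_le_right _ _)).trans_lt hrank

theorem exists_isMinOn_nuclearPenalized_rank_le
    (h : ∃ δ, IsMinOn (nuclearPenalized g G lam) univ δ) :
    ∃ δ, IsMinOn (nuclearPenalized g G lam) univ δ ∧
      δ.rank * (δ.rank + 1) / 2 ≤ Fintype.card P := by
  classical
  obtain ⟨δ₀, hδ₀⟩ := h
  have hex : ∃ r, ∃ δ : Matrix (Fin m) (Fin n) ℝ,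
      IsMinOn (nuclearPenalized g G lam) univ δ ∧ δ.rank = r := ⟨δ₀.rank, δ₀, hδ₀, rfl⟩
  obtain ⟨δ, hδ, hr⟩ := Nat.find_spec hex
  refine ⟨δ, hδ, not_lt.mp fun hlt => ?_⟩
  obtain ⟨A, B, hδAB, hAB⟩ := exists_balanced_factorization δ
  rw [← hδAB] at hδ
  obtain ⟨δ', hδ', hrank⟩ := exists_isMinOn_nuclearPenalized_rank_lt hAB hδ
    (by rwa [Fintype.card_fin])
  rw [Fintype.card_fin, hr] at hrank
  exact Nat.find_min hex hrank ⟨δ', hδ', rfl⟩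

end LowRank

theorem lowRank_solution_exists_general
    (m n K N : ℕ)
    (G : Fin N → Fin K → Matrix (Fin m) (Fin n) ℝ)
    (b : Fin N → Fin K → ℝ) (ℓ : Fin N → (Fin K → ℝ) → ℝ)
    (lam : ℝ)
    (hmin : ∃ δ : Matrix (Fin m) (Fin n) ℝ, ∀ δ' : Matrix (Fin m) (Fin n) ℝ,
      Lhat G b ℓ δ + lam * nuclearNorm δ ≤ Lhat G b ℓ δ' + lam * nuclearNorm δ') :
    ∃ δstar : Matrix (Fin m) (Fin n) ℝ,
      (∀ δ' : Matrix (Fin m) (Fin n) ℝ,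
        Lhat G b ℓ δstar + lam * nuclearNorm δstar ≤ Lhat G b ℓ δ' + lam * nuclearNorm δ') ∧
      δstar.rank * (δstar.rank + 1) / 2 ≤ K * N := by
  let g : (Fin N × Fin K → ℝ) → ℝ := fun v => (1 / (N : ℝ)) * ∑ i, ℓ i fun j => b i j + v (i, j)
  obtain ⟨δ, hδ, hrank⟩ := exists_isMinOn_nuclearPenalized_rank_le (g := g)
    (G := fun p => G p.1 p.2) (lam := lam) (hmin.imp fun δ hδ => isMinOn_univ_iff.mpr hδ)
  refine ⟨δ, isMinOn_univ_iff.mp hδ, ?_⟩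
  rwa [Fintype.card_prod, Fintype.card_fin, Fintype.card_fin, Nat.mul_comm N K] at hrank

/-- Theorem 3.1: if `L̂_λ` has a global minimizer, then it has a global
minimizer `δ*` whose rank `r = rank δ*` satisfies `r(r+1)/2 ≤ KN`. -/
theorem lowRank_solution_exists
    (m n K N : ℕ) (hm : 0 < m) (hn : 0 < n) (hK : 0 < K) (hN : 0 < N)
    (G : Fin N → Fin K → Matrix (Fin m) (Fin n) ℝ)
    (b : Fin N → Fin K → ℝ) (ℓ : Fin N → (Fin K → ℝ) → ℝ)
    (hconv : ∀ i, ConvexOn ℝ Set.univ (ℓ i))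
    (hnonneg : ∀ i x, 0 ≤ ℓ i x)
    (hsmooth : ∀ i, ContDiff ℝ 2 (ℓ i))
    (lam : ℝ) (hlam : 0 ≤ lam)
    (hmin : ∃ δ : Matrix (Fin m) (Fin n) ℝ, ∀ δ' : Matrix (Fin m) (Fin n) ℝ,
      Lhat G b ℓ δ + lam * nuclearNorm δ ≤ Lhat G b ℓ δ' + lam * nuclearNorm δ') :
    ∃ δstar : Matrix (Fin m) (Fin n) ℝ,
      (∀ δ' : Matrix (Fin m) (Fin n) ℝ,
        Lhat G b ℓ δstar + lam * nuclearNorm δstar ≤ Lhat G b ℓ δ' + lam * nuclearNorm δ') ∧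
      δstar.rank * (δstar.rank + 1) / 2 ≤ K * N :=
  lowRank_solution_exists_general m n K N G b ℓ lam hmin
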